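/- arXiv:1309.6664 — 3 statements merged into one kernel-verified Lean document; each statement's English description precedes it below -/
import Mathlib

section
/- Multiplication lemma for permanences: for every nonzero real polynomial Q and every real α > 0, the polynomial (X + α)·Q(X) has strictly more sign permanences than Q; that is, c((X + α)·Q) ≥ c(Q) + 1. -/
open Polynomial

/-- Number of sign changes in a list of reals, after discarding zero entries:
the number of consecutive pairs with negative product. -/
noncomputable def signChanges (l : List ℝ) : ℕ :=
  let l' := l.filter (fun x => decide (x ≠ 0))
  (l'.zip l'.tail).countP (fun p => decide (p.1 * p.2 < 0))

/-- `v(P)`: number of sign changes in the sequence of nonzero coefficients of `P`,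
listed in order of increasing degree. -/
noncomputable def v (P : Polynomial ℝ) : ℕ :=
  signChanges (List.ofFn fun i : Fin (P.natDegree + 1) => P.coeff i)

/-- `c(P) := v(P(-X))`: the number of sign permanences of `P` (minimization convention). -/
noncomputable def c (P : Polynomial ℝ) : ℕ :=
  v (P.comp (-Polynomial.X))

/-- `z⁺(P)`: number of positive real roots of `P`, with multiplicity. -/
noncomputable def zpos (P : Polynomial ℝ) : ℕ :=
  (P.roots.filter (fun x => 0 < x)).card

/-- `z⁻(P)`: number of negative real roots of `P`, with multiplicity. -/
noncomputable def zneg (P : Polynomial ℝ) : ℕ :=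
  (P.roots.filter (fun x => x < 0)).card

/-!
Substituting `-X` turns `(X + α) * Q` into `-((X - α) * Q(-X))`, so the claim is the step
`v R + 1 ≤ v ((X - α) * R)` of Descartes' rule of signs, for `R = Q(-X)`. Mathlib proves that
step for `Polynomial.signVariations`, which reads the coefficients from the leading one down and
counts the maximal blocks of equal nonzero signs, minus one; `v` agrees with it because the number
of sign changes does not depend on the direction in which the sequence is read.
-/

theorem List.countP_zip_tail_reverse {α : Type*} (r : α → α → Prop) [DecidableRel r]
    [Std.Symm r] (l : List α) :
    (l.reverse.zip l.reverse.tail).countP (fun p => decide (r p.1 p.2)) =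
      (l.zip l.tail).countP (fun p => decide (r p.1 p.2)) := by
  have zip_tail : ∀ m : List α, m.zip m.tail = m.dropLast.zip m.tail := fun m => by
    rw [List.zip_eq_zip_take_min, List.zip_eq_zip_take_min (l₁ := m.dropLast)]
    simp [List.dropLast_eq_take, List.take_take]
  rw [zip_tail, List.dropLast_reverse, List.tail_reverse, List.zip_eq_zipWith,
    ← List.reverse_zipWith (by simp), ← List.zip_eq_zipWith, List.countP_reverse,
    ← List.zip_swap, List.countP_map, zip_tail]
  congr 1
  funext p
  simp [comm]

theorem signChanges_reverse (l : List ℝ) : signChanges l.reverse = signChanges l := by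
  have : Std.Symm fun a b : ℝ => a * b < 0 := ⟨fun a b h => by rwa [mul_comm]⟩
  simp only [signChanges, List.filter_reverse]
  exact List.countP_zip_tail_reverse (fun a b : ℝ => a * b < 0) _

theorem mul_neg_iff_sign_ne {R : Type*} [Ring R] [LinearOrder R] [IsStrictOrderedRing R]
    {a b : R} (ha : a ≠ 0) (hb : b ≠ 0) :
    a * b < 0 ↔ SignType.sign a ≠ SignType.sign b := by
  rcases ha.lt_or_gt with ha | ha <;> rcases hb.lt_or_gt with hb | hb <;>
    simp [mul_neg_iff, sign_neg, sign_pos, ha, hb, ha.not_gt, hb.not_gt]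

theorem countP_zip_tail_mul_neg_eq_length_destutter_sub_one (l : List ℝ)
    (hl : ∀ x ∈ l, x ≠ 0) :
    (l.zip l.tail).countP (fun p => decide (p.1 * p.2 < 0)) =
      ((l.map SignType.sign).destutter (· ≠ ·)).length - 1 := by
  induction l with
  | nil => rfl
  | cons a l ih =>
    cases l with
    | nil => rfl
    | cons b l =>
      simp only [List.mem_cons, forall_eq_or_imp] at hl ih
      have ih' := ih hl.2
      simp only [List.tail_cons, List.map_cons, List.destutter_cons'] at ih'
      have hlen : 0 < ((l.map SignType.sign).destutter' (· ≠ ·) (SignType.sign b)).length :=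
        List.length_pos_of_ne_nil (List.destutter'_ne_nil _ _)
      simp only [List.tail_cons, List.zip_cons_cons, List.countP_cons, ih', List.map_cons,
        List.destutter_cons', List.destutter'_cons, decide_eq_true_eq,
        mul_neg_iff_sign_ne hl.1 hl.2.1]
      by_cases h : SignType.sign a = SignType.sign b
      · simp [h]
      · simp only [ne_eq, h, not_false_eq_true, ↓reduceIte, List.length_cons,
          add_tsub_cancel_right] at hlen ⊢
        omega

theorem signChanges_eq_length_destutter_sub_one (l : List ℝ) :
    signChanges l =
      (((l.map SignType.sign).filter (· ≠ 0)).destutter (· ≠ ·)).length - 1 := by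
  have map_filter : (l.map SignType.sign).filter (· ≠ 0) =
      (l.filter (fun x => decide (x ≠ 0))).map SignType.sign := by
    rw [List.filter_map]
    congr 1
    exact List.filter_congr fun x _ => by simp
  rw [map_filter, signChanges]
  exact countP_zip_tail_mul_neg_eq_length_destutter_sub_one _ fun x hx => by
    simpa using (List.mem_filter.mp hx).2

theorem coeffList_eq_reverse_ofFn {P : ℝ[X]} (hP : P ≠ 0) :
    P.coeffList = (List.ofFn fun i : Fin (P.natDegree + 1) => P.coeff i).reverse := by
  rw [coeffList, withBotSucc_degree_eq_natDegree_add_one hP, List.map_reverse]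
  congr 1
  exact List.ext_getElem (by simp) fun i _ _ => by
    rw [List.getElem_ofFn, List.getElem_map, List.getElem_range]

theorem v_eq_signVariations (P : ℝ[X]) : v P = P.signVariations := by
  rcases eq_or_ne P 0 with rfl | hP
  · simp [v, signChanges]
  · rw [v, ← signChanges_reverse, signChanges_eq_length_destutter_sub_one, signVariations,
      coeffList_eq_reverse_ofFn hP]

/-- Multiplication lemma for permanences: for `α > 0`, multiplying a nonzero
polynomial `Q` by `X + α` strictly increases the number of sign permanences:
`c((X + α)·Q) ≥ c(Q) + 1`. -/
theorem c_mul_X_add_C (Q : Polynomial ℝ) (hQ : Q ≠ 0) (α : ℝ) (hα : 0 < α) :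
    c Q + 1 ≤ c ((Polynomial.X + Polynomial.C α) * Q) := by
  have hR : Q.comp (-X) ≠ 0 := fun h => hQ <| by
    rw [← comp_neg_X_comp_neg_X Q, h, zero_comp]
  have hcomp : ((X + C α) * Q).comp (-X) = -((X - C α) * Q.comp (-X)) := by
    rw [mul_comp, add_comp, X_comp, C_comp]
    ring
  rw [c, c, hcomp, v_eq_signVariations, v_eq_signVariations, signVariations_neg]
  exact succ_signVariations_le_X_sub_C_mul hα hR
end

section
/- Budan's rule (Budan–Fourier theorem): let P be a real polynomial of degree n and let a ≤ b be real numbers with P(a) ≠ 0. Then the number of real roots of P in the interval (a, b], counted with multiplicity, is at most v(P, a) − v(P, b), and moreover it is congruent to v(P, a) − v(P, b) modulo 2. -/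
open Polynomial

/-- `v(P, t)`: number of sign changes in the sequence `(P(t), P'(t), …, P⁽ⁿ⁾(t))`
(`n = deg P`), after deleting its zero entries. -/
noncomputable def vAt (P : Polynomial ℝ) (t : ℝ) : ℕ :=
  signChanges (List.ofFn fun i : Fin (P.natDegree + 1) =>
    ((Polynomial.derivative)^[(i : ℕ)] P).eval t)
open Filter Topology

/-!
Write `N(s, t)` for the number of roots of `P` in `(s, t]`. The relation
"`v(P, s) - v(P, t) - N(s, t)` is a nonnegative even integer" composes along `s ≤ t ≤ u`, so a
supremum argument reduces it to points `t` just to the right of some `c` (with `s = c`) and points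
`s` just to the left of `c` (with `t = c`). There it follows by induction on the degree, peeling
`P` off the front of its derivative sequence: if `c` is a root of multiplicity `m` and `d` is the
first derivative not vanishing at `c`, then `P` has the sign of `d` just right of `c` and that of
`(-1)^m d` just left of it. So `v(P, ·)` is right-continuous, and moving from just left of `c` to
`c` it drops by `m` plus an even number.
-/

theorem rel_of_le_of_eventually_nhdsGT_nhdsLT {α : Type*} [ConditionallyCompleteLinearOrder α]
    [TopologicalSpace α] [OrderTopology α] [DenselyOrdered α] (Q : α → α → Prop)
    (refl : ∀ x, Q x x) (trans : ∀ x y z, x ≤ y → y ≤ z → Q x y → Q y z → Q x z)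
    (right : ∀ x, ∀ᶠ y in 𝓝[>] x, Q x y) (left : ∀ x, ∀ᶠ y in 𝓝[<] x, Q y x)
    {a b : α} (hab : a ≤ b) : Q a b := by
  set S := {x | x ∈ Set.Icc a b ∧ Q a x}
  have haS : a ∈ S := ⟨⟨le_rfl, hab⟩, refl a⟩
  obtain ⟨s, hs⟩ : ∃ s, IsLUB S s := ⟨sSup S, isLUB_csSup ⟨a, haS⟩ ⟨b, fun x hx => hx.1.2⟩⟩
  have has : a ≤ s := hs.1 haS
  have hQs : Q a s := by
    rcases has.eq_or_lt with rfl | has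
    · exact refl a
    obtain ⟨l, hl, hsub⟩ := (mem_nhdsLT_iff_exists_Ioo_subset' has).1 (left s)
    obtain ⟨x, hxS, hlx, hxs⟩ := hs.exists_between hl
    rcases hxs.eq_or_lt with rfl | hxs
    · exact hxS.2
    · exact trans a x s hxS.1.1 hxs.le hxS.2 (hsub ⟨hlx, hxs⟩)
  rcases (hs.2 fun x hx => hx.1.2 : s ≤ b).eq_or_lt with rfl | hsb
  · exact hQs
  obtain ⟨u, hu, hsub⟩ := (mem_nhdsGT_iff_exists_Ioo_subset' hsb).1 (right s)
  obtain ⟨t, hst, htu⟩ := exists_between (lt_min hu hsb)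
  have htS : t ∈ S :=
    ⟨⟨has.trans hst.le, htu.le.trans (min_le_right _ _)⟩,
      trans a s t has hst.le hQs (hsub ⟨hst, htu.trans_le (min_le_left _ _)⟩)⟩
  exact absurd (hs.1 htS) (not_le.2 hst)

theorem Multiset.card_filter_Ioc_add_card_filter_Ioc {α : Type*} [LinearOrder α] (m : Multiset α)
    {r s t : α} (hrs : r ≤ s) (hst : s ≤ t) :
    (m.filter fun x => r < x ∧ x ≤ s).card + (m.filter fun x => s < x ∧ x ≤ t).card =
      (m.filter fun x => r < x ∧ x ≤ t).card := by
  have hdisj : (m.filter fun x => (r < x ∧ x ≤ s) ∧ s < x ∧ x ≤ t) = 0 :=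
    Multiset.filter_eq_nil.2 fun x _ h => (h.2.1.trans_le h.1.2).false
  rw [← Multiset.card_add, Multiset.filter_add_filter, hdisj, add_zero]
  congr 1
  exact Multiset.filter_congr fun x _ => by grind

noncomputable def firstNonzero (l : List ℝ) : ℝ :=
  (l.filter fun x => decide (x ≠ 0)).headD 0

theorem firstNonzero_cons_of_ne_zero {x : ℝ} (hx : x ≠ 0) (l : List ℝ) :
    firstNonzero (x :: l) = x := by
  simp [firstNonzero, hx]

@[simp]
theorem firstNonzero_cons_zero (l : List ℝ) : firstNonzero (0 :: l) = firstNonzero l := by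
  simp [firstNonzero]

@[simp]
theorem firstNonzero_singleton (x : ℝ) : firstNonzero [x] = x := by
  by_cases hx : x = 0 <;> simp [firstNonzero, hx]

@[simp]
theorem signChanges_singleton (x : ℝ) : signChanges [x] = 0 := by
  by_cases hx : x = 0 <;> simp [signChanges, hx]

theorem signChanges_cons (x : ℝ) (l : List ℝ) :
    signChanges (x :: l) = signChanges l + if x * firstNonzero l < 0 then 1 else 0 := by
  by_cases hx : x = 0
  · simp [signChanges, hx]
  unfold signChanges firstNonzero
  simp only [List.filter_cons, hx, decide_true, ne_eq, not_false_eq_true, if_true]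
  cases l.filter fun y => decide (y ≠ 0) with
  | nil => simp
  | cons y t => simp [List.countP_cons, add_comm]

noncomputable def derivSeq (P : ℝ[X]) (t : ℝ) : List ℝ :=
  List.ofFn fun i : Fin (P.natDegree + 1) => (derivative^[i] P).eval t

theorem vAt_eq_signChanges_derivSeq (P : ℝ[X]) (t : ℝ) :
    vAt P t = signChanges (derivSeq P t) := rfl

theorem derivSeq_of_natDegree_eq_zero {P : ℝ[X]} (h : P.natDegree = 0) (t : ℝ) :
    derivSeq P t = [P.eval t] := by
  simp [derivSeq, h]

theorem derivSeq_of_natDegree_ne_zero {P : ℝ[X]} (h : P.natDegree ≠ 0) (t : ℝ) :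
    derivSeq P t = P.eval t :: derivSeq (derivative P) t := by
  have hdeg : P.natDegree + 1 = (derivative P).natDegree + 1 + 1 := by
    rw [natDegree_derivative]
    omega
  rw [derivSeq, List.ofFn_congr hdeg, List.ofFn_succ]
  simp [derivSeq, Function.iterate_succ_apply]

noncomputable def firstNonzeroDeriv (P : ℝ[X]) (c : ℝ) : ℝ :=
  (derivative^[P.rootMultiplicity c] P).eval c

theorem firstNonzeroDeriv_ne_zero {P : ℝ[X]} (hP : P ≠ 0) (c : ℝ) :
    firstNonzeroDeriv P c ≠ 0 := by
  rw [firstNonzeroDeriv, eval_iterate_derivative_rootMultiplicity, nsmul_eq_mul]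
  exact mul_ne_zero (Nat.cast_ne_zero.2 (Nat.factorial_ne_zero _))
    (eval_divByMonic_pow_rootMultiplicity_ne_zero c hP)

theorem firstNonzeroDeriv_of_eval_ne_zero {P : ℝ[X]} {c : ℝ} (h : P.eval c ≠ 0) :
    firstNonzeroDeriv P c = P.eval c := by
  rw [firstNonzeroDeriv, rootMultiplicity_eq_zero h, Function.iterate_zero_apply]

theorem firstNonzeroDeriv_of_natDegree_eq_zero {P : ℝ[X]} (h : P.natDegree = 0) (c : ℝ) :
    firstNonzeroDeriv P c = P.eval c := by
  obtain ⟨a, rfl⟩ := natDegree_eq_zero.1 h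
  rw [firstNonzeroDeriv, rootMultiplicity_C, Function.iterate_zero_apply]

theorem firstNonzeroDeriv_derivative_of_isRoot {P : ℝ[X]} {c : ℝ} (h : P.IsRoot c) :
    firstNonzeroDeriv (derivative P) c = firstNonzeroDeriv P c := by
  rcases eq_or_ne P 0 with rfl | hP
  · simp
  obtain ⟨m, hm⟩ := Nat.exists_eq_add_one_of_ne_zero ((rootMultiplicity_pos hP).2 h).ne'
  rw [firstNonzeroDeriv, firstNonzeroDeriv, derivative_rootMultiplicity_of_root h, hm]
  simp [Function.iterate_succ_apply]

theorem firstNonzero_derivSeq (P : ℝ[X]) (t : ℝ) :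
    firstNonzero (derivSeq P t) = firstNonzeroDeriv P t := by
  by_cases h0 : P.natDegree = 0
  · rw [derivSeq_of_natDegree_eq_zero h0, firstNonzero_singleton,
      firstNonzeroDeriv_of_natDegree_eq_zero h0]
  rw [derivSeq_of_natDegree_ne_zero h0]
  by_cases ht : P.eval t = 0
  · rw [ht, firstNonzero_cons_zero, firstNonzero_derivSeq (derivative P),
      firstNonzeroDeriv_derivative_of_isRoot ht]
  · rw [firstNonzero_cons_of_ne_zero ht, firstNonzeroDeriv_of_eval_ne_zero ht]
termination_by P.natDegree
decreasing_by exact natDegree_derivative_lt h0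

theorem vAt_of_natDegree_eq_zero {P : ℝ[X]} (h : P.natDegree = 0) (t : ℝ) : vAt P t = 0 := by
  rw [vAt_eq_signChanges_derivSeq, derivSeq_of_natDegree_eq_zero h, signChanges_singleton]

theorem vAt_of_natDegree_ne_zero {P : ℝ[X]} (h : P.natDegree ≠ 0) (t : ℝ) :
    vAt P t = vAt (derivative P) t +
      if P.eval t * firstNonzeroDeriv (derivative P) t < 0 then 1 else 0 := by
  rw [vAt_eq_signChanges_derivSeq, derivSeq_of_natDegree_ne_zero h, signChanges_cons,
    firstNonzero_derivSeq, vAt_eq_signChanges_derivSeq]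

theorem exists_eval_mul_firstNonzeroDeriv_eq {P : ℝ[X]} (hP : P ≠ 0) (c : ℝ) :
    ∃ g : ℝ → ℝ, (∀ᶠ t in 𝓝 c, 0 < g t) ∧
      ∀ t, P.eval t * firstNonzeroDeriv P c = (t - c) ^ P.rootMultiplicity c * g t := by
  set m := P.rootMultiplicity c
  set R := P /ₘ (X - C c) ^ m
  have hRc : 0 < R.eval c * R.eval c :=
    mul_self_pos.2 (eval_divByMonic_pow_rootMultiplicity_ne_zero c hP)
  refine ⟨fun t => m.factorial * (R.eval t * R.eval c), ?_, fun t => ?_⟩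
  · filter_upwards [((R.continuous.tendsto c).mul_const (R.eval c)).eventually_const_lt hRc]
      with t ht
    positivity
  · have hPt : P.eval t = (t - c) ^ m * R.eval t := by
      conv_lhs => rw [← pow_mul_divByMonic_rootMultiplicity_eq P c]
      simp only [eval_mul, eval_pow, eval_sub, eval_X, eval_C, m, R]
    rw [hPt, firstNonzeroDeriv, eval_iterate_derivative_rootMultiplicity, nsmul_eq_mul]
    ring

theorem eventually_nhdsGT_eval_mul_firstNonzeroDeriv_pos {P : ℝ[X]} (hP : P ≠ 0) (c : ℝ) :
    ∀ᶠ t in 𝓝[>] c, 0 < P.eval t * firstNonzeroDeriv P c := by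
  obtain ⟨g, hg, hPg⟩ := exists_eval_mul_firstNonzeroDeriv_eq hP c
  filter_upwards [nhdsWithin_le_nhds hg, self_mem_nhdsWithin] with t hgt (hct : c < t)
  rw [hPg]
  exact mul_pos (pow_pos (sub_pos.2 hct) _) hgt

theorem eventually_nhdsLT_eval_mul_firstNonzeroDeriv_pos {P : ℝ[X]} (hP : P ≠ 0) (c : ℝ) :
    ∀ᶠ t in 𝓝[<] c, 0 < (-1) ^ P.rootMultiplicity c * P.eval t * firstNonzeroDeriv P c := by
  obtain ⟨g, hg, hPg⟩ := exists_eval_mul_firstNonzeroDeriv_eq hP c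
  filter_upwards [nhdsWithin_le_nhds hg, self_mem_nhdsWithin] with t hgt (htc : t < c)
  rw [mul_assoc, hPg, ← mul_assoc, ← mul_pow, neg_one_mul, neg_sub]
  exact mul_pos (pow_pos (sub_pos.2 htc) _) hgt

theorem exists_add_ite_mul_neg_eq {x y u v : ℝ} (m : ℕ) (hxu : 0 < x * u)
    (hyv : 0 < (-1) ^ m * y * v) :
    ∃ e : ℕ, m + (if x * y < 0 then 1 else 0) = (if u * v < 0 then 1 else 0) + 2 * e := by
  rcases Nat.even_or_odd m with ⟨k, rfl⟩ | ⟨k, rfl⟩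
  · rw [Even.neg_one_pow ⟨k, rfl⟩, one_mul] at hyv
    have hsame : x * y < 0 ↔ u * v < 0 := by
      constructor <;> intro h <;> nlinarith [mul_pos hxu hyv]
    refine ⟨k, ?_⟩
    simp only [hsame]
    omega
  · rw [Odd.neg_one_pow ⟨k, rfl⟩, neg_one_mul, neg_mul] at hyv
    have hflip : x * y < 0 ↔ ¬u * v < 0 := by
      constructor
      · intro h h'
        nlinarith [mul_pos hxu hyv]
      · intro h
        nlinarith [mul_pos hxu hyv]
    by_cases h : u * v < 0
    · exact ⟨k, by rw [if_neg (hflip.not.2 (not_not.2 h)), if_pos h]; omega⟩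
    · exact ⟨k + 1, by rw [if_pos (hflip.2 h), if_neg h]; omega⟩

theorem eventually_nhdsGT_vAt_eq (P : ℝ[X]) (c : ℝ) : ∀ᶠ t in 𝓝[>] c, vAt P t = vAt P c := by
  by_cases h0 : P.natDegree = 0
  · exact Eventually.of_forall fun t => by
      rw [vAt_of_natDegree_eq_zero h0, vAt_of_natDegree_eq_zero h0]
  have hP : P ≠ 0 := fun h => h0 (by simp [h])
  have hP' : derivative P ≠ 0 := fun h => h0 (derivative_eq_zero.1 h)
  filter_upwards [eventually_nhdsGT_vAt_eq (derivative P) c,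
    eventually_nhdsGT_eval_mul_firstNonzeroDeriv_pos hP c,
    eventually_nhdsGT_eval_mul_firstNonzeroDeriv_pos hP' c] with t hv hPt hP't
  rw [vAt_of_natDegree_ne_zero h0, vAt_of_natDegree_ne_zero h0, hv,
    firstNonzeroDeriv_of_eval_ne_zero (left_ne_zero_of_mul hP't.ne')]
  by_cases hc : P.IsRoot c
  · rw [firstNonzeroDeriv_derivative_of_isRoot hc] at hP't
    have hd := firstNonzeroDeriv_ne_zero hP c
    have hpos : 0 < P.eval t * (derivative P).eval t := by
      nlinarith [mul_pos hPt hP't, mul_self_pos.2 hd]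
    rw [hc.eq_zero, zero_mul, if_neg (lt_irrefl 0), if_neg (not_lt.2 hpos.le)]
  · rw [firstNonzeroDeriv_of_eval_ne_zero hc] at hPt
    obtain ⟨e, he⟩ := exists_add_ite_mul_neg_eq 0 hPt (by simpa using hP't)
    split_ifs at he ⊢ <;> omega
termination_by P.natDegree
decreasing_by exact natDegree_derivative_lt h0

theorem eventually_nhdsLT_vAt (P : ℝ[X]) (c : ℝ) :
    ∀ᶠ t in 𝓝[<] c, ∃ e : ℕ, vAt P t = vAt P c + P.rootMultiplicity c + 2 * e := by
  by_cases h0 : P.natDegree = 0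
  · refine Eventually.of_forall fun t => ⟨0, ?_⟩
    obtain ⟨a, rfl⟩ := natDegree_eq_zero.1 h0
    rw [vAt_of_natDegree_eq_zero h0, vAt_of_natDegree_eq_zero h0, rootMultiplicity_C]
  have hP : P ≠ 0 := fun h => h0 (by simp [h])
  have hP' : derivative P ≠ 0 := fun h => h0 (derivative_eq_zero.1 h)
  filter_upwards [eventually_nhdsLT_vAt (derivative P) c,
    eventually_nhdsLT_eval_mul_firstNonzeroDeriv_pos hP c,
    eventually_nhdsLT_eval_mul_firstNonzeroDeriv_pos hP' c] with t ⟨e, he⟩ hPt hP't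
  rw [vAt_of_natDegree_ne_zero h0, vAt_of_natDegree_ne_zero h0, he,
    firstNonzeroDeriv_of_eval_ne_zero (right_ne_zero_of_mul (left_ne_zero_of_mul hP't.ne'))]
  by_cases hc : P.IsRoot c
  · obtain ⟨k, hk⟩ := Nat.exists_eq_add_one_of_ne_zero ((rootMultiplicity_pos hP).2 hc).ne'
    have hk' : (derivative P).rootMultiplicity c = k := by
      rw [derivative_rootMultiplicity_of_root hc, hk, Nat.add_sub_cancel]
    rw [hk', firstNonzeroDeriv_derivative_of_isRoot hc] at hP't
    rw [hk, pow_succ] at hPt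
    have hd := firstNonzeroDeriv_ne_zero hP c
    have hneg : P.eval t * (derivative P).eval t < 0 := by
      rcases neg_one_pow_eq_or ℝ k with hs | hs <;> rw [hs] at hPt hP't <;>
        nlinarith [mul_pos hPt hP't, mul_self_pos.2 hd]
    refine ⟨e, ?_⟩
    rw [hc.eq_zero, zero_mul, if_neg (lt_irrefl 0), if_pos hneg, hk, hk']
    omega
  · rw [rootMultiplicity_eq_zero hc, pow_zero, one_mul,
      firstNonzeroDeriv_of_eval_ne_zero hc] at hPt
    obtain ⟨e', he'⟩ := exists_add_ite_mul_neg_eq _ hPt hP't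
    exact ⟨e + e', by rw [rootMultiplicity_eq_zero hc]; omega⟩
termination_by P.natDegree
decreasing_by exact natDegree_derivative_lt h0

noncomputable def rootCountIoc (P : ℝ[X]) (s t : ℝ) : ℕ :=
  (P.roots.filter fun x => s < x ∧ x ≤ t).card

theorem rootCountIoc_self (P : ℝ[X]) (s : ℝ) : rootCountIoc P s s = 0 :=
  Multiset.card_eq_zero.2 <| Multiset.filter_eq_nil.2 fun _ _ h => (h.1.trans_le h.2).false

theorem rootCountIoc_add_rootCountIoc (P : ℝ[X]) {r s t : ℝ} (hrs : r ≤ s) (hst : s ≤ t) :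
    rootCountIoc P r s + rootCountIoc P s t = rootCountIoc P r t :=
  P.roots.card_filter_Ioc_add_card_filter_Ioc hrs hst

theorem eventually_nhds_eq_of_mem_roots (P : ℝ[X]) (c : ℝ) :
    ∀ᶠ x in 𝓝 c, x ∈ P.roots → x = c := by
  filter_upwards [(P.roots.toFinset.erase c).finite_toSet.isClosed.compl_mem_nhds (by simp)]
    with x hx hroot
  by_contra hxc
  exact hx (by simp [hxc, hroot])

theorem eventually_nhdsGT_rootCountIoc_eq_zero (P : ℝ[X]) (c : ℝ) :
    ∀ᶠ t in 𝓝[>] c, rootCountIoc P c t = 0 := by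
  obtain ⟨u, hcu, hsub⟩ := exists_Ico_subset_of_mem_nhds (eventually_nhds_eq_of_mem_roots P c)
    ⟨c + 1, by linarith⟩
  filter_upwards [Ioo_mem_nhdsGT hcu] with t ht
  refine Multiset.card_eq_zero.2 (Multiset.filter_eq_nil.2 fun x hx h => ?_)
  exact h.1.ne' (hsub ⟨h.1.le, h.2.trans_lt ht.2⟩ hx)

theorem eventually_nhdsLT_rootCountIoc_eq (P : ℝ[X]) (c : ℝ) :
    ∀ᶠ t in 𝓝[<] c, rootCountIoc P t c = P.rootMultiplicity c := by
  obtain ⟨l, hlc, hsub⟩ := exists_Ioc_subset_of_mem_nhds (eventually_nhds_eq_of_mem_roots P c)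
    ⟨c - 1, by linarith⟩
  filter_upwards [Ioo_mem_nhdsLT hlc] with t ht
  rw [rootCountIoc, ← count_roots, Multiset.count_eq_card_filter_eq]
  congr 1
  refine Multiset.filter_congr fun x hx => ⟨fun h => (hsub ⟨ht.1.trans h.1, h.2⟩ hx).symm, ?_⟩
  rintro rfl
  exact ⟨ht.2, le_rfl⟩

theorem exists_vAt_eq_add_rootCountIoc (P : ℝ[X]) {a b : ℝ} (hab : a ≤ b) :
    ∃ e : ℕ, vAt P a = vAt P b + rootCountIoc P a b + 2 * e := by
  refine rel_of_le_of_eventually_nhdsGT_nhdsLT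
    (fun s t => ∃ e : ℕ, vAt P s = vAt P t + rootCountIoc P s t + 2 * e)
    (fun s => ⟨0, by simp [rootCountIoc_self]⟩) ?_ (fun c => ?_) (fun c => ?_) hab
  · rintro r s t hrs hst ⟨e₁, h₁⟩ ⟨e₂, h₂⟩
    refine ⟨e₁ + e₂, ?_⟩
    rw [← rootCountIoc_add_rootCountIoc P hrs hst]
    omega
  · filter_upwards [eventually_nhdsGT_vAt_eq P c, eventually_nhdsGT_rootCountIoc_eq_zero P c]
      with t hv hr
    exact ⟨0, by simp [hv, hr]⟩
  · filter_upwards [eventually_nhdsLT_vAt P c, eventually_nhdsLT_rootCountIoc_eq P c]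
      with t ⟨e, he⟩ hr
    exact ⟨e, by rw [hr, he]⟩

theorem budan_fourier_general (P : Polynomial ℝ) (a b : ℝ) (hab : a ≤ b) :
    (((P.roots.filter (fun x => a < x ∧ x ≤ b)).card : ℤ) ≤ (vAt P a : ℤ) - vAt P b) ∧
    ((P.roots.filter (fun x => a < x ∧ x ≤ b)).card : ℤ) ≡
      (vAt P a : ℤ) - vAt P b [ZMOD 2] := by
  obtain ⟨e, he⟩ := exists_vAt_eq_add_rootCountIoc P hab
  rw [rootCountIoc] at he
  refine ⟨by omega, ?_⟩
  unfold Int.ModEq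
  omega

/-- Budan's rule (Budan–Fourier theorem): if `a ≤ b` and `P(a) ≠ 0`, then the number of
real roots of `P` in `(a, b]`, with multiplicity, is at most `v(P, a) - v(P, b)`, and is
congruent to it modulo `2`. -/
theorem budan_fourier (P : Polynomial ℝ) (a b : ℝ) (hab : a ≤ b) (ha : P.eval a ≠ 0) :
    (((P.roots.filter (fun x => a < x ∧ x ≤ b)).card : ℤ) ≤ (vAt P a : ℤ) - vAt P b) ∧
    ((P.roots.filter (fun x => a < x ∧ x ≤ b)).card : ℤ) ≡
      (vAt P a : ℤ) - vAt P b [ZMOD 2] :=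
  budan_fourier_general P a b hab
end

section
/- Local behavior at a non-zero point (Claim 1): let f : [a, b] → ℝ be n times differentiable on [a, b] with f⁽ⁿ⁾ never vanishing and of constant sign on [a, b], and let α ∈ [a, b] with f(α) ≠ 0. Then there exists η > 0 such that for all u, v ∈ [a, b] with α − η < u ≤ α ≤ v < α + η, the function f has no zero in [u, v] and v(f, u, n) ≥ v(f, v, n). -/
/-- `v(f, t, n)`: number of sign changes in the sequence `(f(t), f'(t), …, f⁽ⁿ⁾(t))`
after deleting its zero entries, where the derivatives are taken within the set `s`
(one-sidedly at its endpoints). -/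
noncomputable def vF (n : ℕ) (f : ℝ → ℝ) (s : Set ℝ) (t : ℝ) : ℕ :=
  signChanges (List.ofFn fun i : Fin (n + 1) => iteratedDerivWithin (i : ℕ) f s t)

/-! Near `α`, each `f⁽ⁱ⁾` that does not vanish at `α` keeps its sign, so the nonzero entries of
the sequence at `α` reappear with the same signs in the sequence at `u`: `v(f, α, n) ≤ v(f, u, n)`.
To the right of `α`, an `f⁽ⁱ⁾` vanishing at `α` is strictly monotone on `[α, v]` (its derivative
`f⁽ⁱ⁺¹⁾` does not vanish there, by downward induction from `f⁽ⁿ⁾`, hence has constant sign by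
Darboux), so it takes the sign of `f⁽ⁱ⁺¹⁾(v)`. Thus the sequence at `v` is the sequence at `α` with
every zero replaced by the sign of the next nonzero entry, and `v(f, v, n) ≤ v(f, α, n)`. -/

open Set Filter Topology

theorem mul_neg_iff_of_mul_pos {x y z : ℝ} (hyz : 0 < y * z) : x * y < 0 ↔ x * z < 0 := by
  have hy : 0 < y ^ 2 := sq_pos_of_ne_zero (left_ne_zero_of_mul hyz.ne')
  constructor <;> intro h
  · nlinarith [mul_neg_of_neg_of_pos h hyz]
  · nlinarith [mul_neg_of_neg_of_pos h hyz]

theorem mul_neg_or_mul_neg_of_mul_neg {x y z : ℝ} (hy : y ≠ 0) (hxz : x * z < 0) :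
    x * y < 0 ∨ y * z < 0 := by
  by_contra! h
  nlinarith [mul_nonneg h.1 h.2, sq_pos_of_ne_zero hy]

theorem List.ofFn_comp_val_succ {α : Type*} (n : ℕ) (f : ℕ → α) :
    (List.ofFn fun i : Fin (n + 1) => f i) = f 0 :: List.ofFn fun i : Fin n => f (i + 1) := by
  simp [List.ofFn_succ]

namespace signChanges

@[simp] theorem cons_zero (l : List ℝ) : signChanges (0 :: l) = signChanges l := by
  simp [signChanges]

@[simp] theorem cons_cons_zero (x : ℝ) (l : List ℝ) :
    signChanges (x :: 0 :: l) = signChanges (x :: l) := by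
  simp [signChanges, List.filter_cons]

theorem cons_of_ne_zero {x : ℝ} (hx : x ≠ 0) (l : List ℝ) :
    signChanges (x :: l) =
      (if x * (l.filter (· ≠ 0)).headI < 0 then 1 else 0) + signChanges l := by
  have hfilter : (x :: l).filter (· ≠ 0) = x :: l.filter (· ≠ 0) :=
    List.filter_cons_of_pos (by simpa using hx)
  simp only [signChanges, hfilter]
  rcases l.filter (fun x => decide (x ≠ 0)) with _ | ⟨z, L⟩
  · simp [show (default : ℝ) = 0 from rfl]
  · by_cases h : x * z < 0 <;> simp [h, add_comm]

theorem cons_cons (x : ℝ) {y : ℝ} (hy : y ≠ 0) (l : List ℝ) :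
    signChanges (x :: y :: l) = (if x * y < 0 then 1 else 0) + signChanges (y :: l) := by
  by_cases hx : x = 0
  · simp [hx]
  · rw [cons_of_ne_zero hx, List.filter_cons_of_pos (by simpa using hy), List.headI_cons]

theorem cons_congr {x y : ℝ} (hxy : 0 < x * y) (l : List ℝ) :
    signChanges (x :: l) = signChanges (y :: l) := by
  simp only [cons_of_ne_zero (left_ne_zero_of_mul hxy.ne'),
    cons_of_ne_zero (right_ne_zero_of_mul hxy.ne'), mul_comm x, mul_comm y,
    mul_neg_iff_of_mul_pos hxy]

theorem cons_le_cons_cons (x y : ℝ) (l : List ℝ) :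
    signChanges (x :: l) ≤ signChanges (x :: y :: l) := by
  by_cases hy : y = 0
  · simp [hy]
  by_cases hx : x = 0
  · simp only [hx, cons_zero, cons_of_ne_zero hy]
    omega
  rw [cons_cons x hy, cons_of_ne_zero hx, cons_of_ne_zero hy]
  have := mul_neg_or_mul_neg_of_mul_neg (x := x) (z := (l.filter (· ≠ 0)).headI) hy
  split_ifs <;> simp_all; omega

theorem cons_cons_le_cons_cons_of_mul_pos {y₁ y₂ : ℝ} {l₁ l₂ : List ℝ} (hy : 0 < y₁ * y₂)
    (h : ∀ x, signChanges (x :: l₁) ≤ signChanges (x :: l₂)) (x : ℝ) :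
    signChanges (x :: y₁ :: l₁) ≤ signChanges (x :: y₂ :: l₂) := by
  simp only [cons_cons x (left_ne_zero_of_mul hy.ne'), cons_cons x (right_ne_zero_of_mul hy.ne'),
    mul_neg_iff_of_mul_pos hy, ← cons_congr hy]
  exact Nat.add_le_add_left (h y₁) _

theorem cons_cons_cons_of_mul_pos (x : ℝ) {y z : ℝ} (hyz : 0 < y * z) (l : List ℝ) :
    signChanges (x :: y :: z :: l) = signChanges (x :: z :: l) := by
  have hz : z ≠ 0 := right_ne_zero_of_mul hyz.ne'
  simp only [cons_cons x (left_ne_zero_of_mul hyz.ne'), cons_cons x hz, cons_congr hyz,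
    cons_cons z hz, mul_neg_iff_of_mul_pos hyz, mul_self_nonneg z, not_lt.2, if_false, zero_add]

theorem cons_le_cons_of_forall₂ {l₁ l₂ : List ℝ}
    (h : List.Forall₂ (fun x y => x ≠ 0 → 0 < x * y) l₁ l₂) (x : ℝ) :
    signChanges (x :: l₁) ≤ signChanges (x :: l₂) := by
  induction h generalizing x with
  | nil => rfl
  | @cons x₁ y₁ l₁ l₂ hxy _ ih =>
    by_cases hx₁ : x₁ = 0
    · calc signChanges (x :: x₁ :: l₁) = signChanges (x :: l₁) := by rw [hx₁, cons_cons_zero]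
        _ ≤ signChanges (x :: l₂) := ih x
        _ ≤ signChanges (x :: y₁ :: l₂) := cons_le_cons_cons x y₁ l₂
    · exact cons_cons_le_cons_cons_of_mul_pos (hxy hx₁) ih x

theorem le_of_forall₂ {l₁ l₂ : List ℝ}
    (h : List.Forall₂ (fun x y => x ≠ 0 → 0 < x * y) l₁ l₂) :
    signChanges l₁ ≤ signChanges l₂ := by
  simpa using cons_le_cons_of_forall₂ h 0

theorem cons_ofFn_le_of_next_sign (n : ℕ) (A B : ℕ → ℝ) (hn : A n ≠ 0)
    (hsame : ∀ i ≤ n, A i ≠ 0 → 0 < A i * B i) (hnext : ∀ i < n, A i = 0 → 0 < B i * B (i + 1))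
    (x : ℝ) :
    signChanges (x :: List.ofFn fun i : Fin (n + 1) => B i) ≤
      signChanges (x :: List.ofFn fun i : Fin (n + 1) => A i) := by
  induction n generalizing A B x with
  | zero =>
    exact cons_cons_le_cons_cons_of_mul_pos (mul_comm (A 0) _ ▸ hsame 0 le_rfl hn)
      (fun _ => le_rfl) x
  | succ n ih =>
    have ih' := ih (fun i => A (i + 1)) (fun i => B (i + 1)) hn
      (fun i hi => hsame (i + 1) (by omega)) (fun i hi => hnext (i + 1) (by omega))
    rw [List.ofFn_comp_val_succ (n + 1) A, List.ofFn_comp_val_succ (n + 1) B]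
    by_cases hA : A 0 = 0
    · rw [hA, cons_cons_zero, List.ofFn_comp_val_succ n (fun i => B (i + 1)),
        cons_cons_cons_of_mul_pos x (hnext 0 (by omega) hA),
        ← List.ofFn_comp_val_succ n (fun i => B (i + 1))]
      exact ih' x
    · exact cons_cons_le_cons_cons_of_mul_pos (mul_comm (A 0) _ ▸ hsame 0 (by omega) hA) ih' x

theorem ofFn_le_of_next_sign (n : ℕ) (A B : ℕ → ℝ) (hn : A n ≠ 0)
    (hsame : ∀ i ≤ n, A i ≠ 0 → 0 < A i * B i) (hnext : ∀ i < n, A i = 0 → 0 < B i * B (i + 1)) :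
    signChanges (List.ofFn fun i : Fin (n + 1) => B i) ≤
      signChanges (List.ofFn fun i : Fin (n + 1) => A i) := by
  simpa using cons_ofFn_le_of_next_sign n A B hn hsame hnext 0

end signChanges

theorem mul_deriv_pos_of_eq_zero {g g' : ℝ → ℝ} {α t : ℝ} (hαt : α < t)
    (hg : ∀ x ∈ Icc α t, HasDerivWithinAt g (g' x) (Icc α t) x)
    (hg' : ∀ x ∈ Ioc α t, g' x ≠ 0) (h0 : g α = 0) : 0 < g t * g' t := by
  have hcont : ContinuousOn g (Icc α t) := fun x hx => (hg x hx).continuousWithinAt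
  have hint : ∀ x ∈ interior (Icc α t),
      HasDerivWithinAt g (g' x) (interior (Icc α t)) x := by
    rw [interior_Icc]
    exact fun x hx => (hg x (Ioo_subset_Icc_self hx)).mono Ioo_subset_Icc_self
  have hα : α ∈ Icc α t := left_mem_Icc.2 hαt.le
  have ht : t ∈ Icc α t := right_mem_Icc.2 hαt.le
  -- Darboux: a derivative that does not vanish on an interval has constant sign there.
  rcases hasDerivWithinAt_forall_lt_or_forall_gt_of_forall_ne (convex_Ioc α t)
    (fun x hx => (hg x (Ioc_subset_Icc_self hx)).mono Ioc_subset_Icc_self) hg' with hneg | hpos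
  · have hanti := strictAntiOn_of_hasDerivWithinAt_neg (convex_Icc α t) hcont hint
      (by rw [interior_Icc]; exact fun x hx => hneg x (Ioo_subset_Ioc_self hx))
    exact mul_pos_of_neg_of_neg (h0 ▸ hanti hα ht hαt) (hneg t ⟨hαt, le_rfl⟩)
  · have hmono := strictMonoOn_of_hasDerivWithinAt_pos (convex_Icc α t) hcont hint
      (by rw [interior_Icc]; exact fun x hx => hpos x (Ioo_subset_Ioc_self hx))
    exact mul_pos (h0 ▸ hmono hα ht hαt) (hpos t ⟨hαt, le_rfl⟩)

theorem eventually_mul_deriv_pos_of_eq_zero {s : Set ℝ} (hs : s.OrdConnected) {g g' : ℝ → ℝ}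
    {α : ℝ} (hα : α ∈ s) (hg : ∀ x ∈ s, HasDerivWithinAt g (g' x) s x) (h0 : g α = 0)
    (hg' : ∀ᶠ t in 𝓝[>] α, t ∈ s → g' t ≠ 0) :
    ∀ᶠ t in 𝓝[>] α, t ∈ s → 0 < g t * g' t := by
  obtain ⟨c, hc, hsub⟩ := mem_nhdsGT_iff_exists_Ioo_subset.1 hg'
  filter_upwards [Ioo_mem_nhdsGT hc] with t ht hts
  have hIcc : Icc α t ⊆ s := hs.out hα hts
  exact mul_deriv_pos_of_eq_zero ht.1 (fun x hx => (hg x (hIcc hx)).mono hIcc)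
    (fun x hx => hsub ⟨hx.1, hx.2.trans_lt ht.2⟩ (hIcc (Ioc_subset_Icc_self hx))) h0

section DerivativeChain

variable {s : Set ℝ} {g : ℕ → ℝ → ℝ} {n : ℕ} {α : ℝ}

theorem eventually_mul_pos_of_ne_zero
    (hg : ∀ i < n, ∀ x ∈ s, HasDerivWithinAt (g i) (g (i + 1) x) s x)
    (hgn : ∀ x ∈ s, ∀ y ∈ s, 0 < g n x * g n y) (hα : α ∈ s) {i : ℕ} (hi : i ≤ n)
    (hgi : g i α ≠ 0) : ∀ᶠ t in 𝓝[s] α, 0 < g i α * g i t := by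
  rcases hi.lt_or_eq with hi | rfl
  · exact ((hg i hi α hα).continuousWithinAt.const_mul (g i α)).eventually_const_lt
      (mul_self_pos.2 hgi)
  · exact eventually_nhdsWithin_of_forall fun t ht => hgn α hα t ht

theorem eventually_nhdsGT_ne_zero (hs : s.OrdConnected)
    (hg : ∀ i < n, ∀ x ∈ s, HasDerivWithinAt (g i) (g (i + 1) x) s x)
    (hgn : ∀ x ∈ s, ∀ y ∈ s, 0 < g n x * g n y) (hα : α ∈ s) {i : ℕ} (hi : i ≤ n) :
    ∀ᶠ t in 𝓝[>] α, t ∈ s → g i t ≠ 0 := by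
  induction hi using Nat.decreasingInduction with
  | self => exact .of_forall fun t ht => left_ne_zero_of_mul (hgn t ht t ht).ne'
  | of_succ k hk ih =>
    by_cases h0 : g k α = 0
    · exact (eventually_mul_deriv_pos_of_eq_zero hs hα (hg k hk) h0 ih).mono
        fun t h ht => left_ne_zero_of_mul (h ht).ne'
    · have hnear := eventually_nhdsWithin_iff.1 (eventually_mul_pos_of_ne_zero hg hgn hα hk.le h0)
      exact (hnear.filter_mono nhdsWithin_le_nhds).mono fun t h ht =>
        right_ne_zero_of_mul (h ht).ne'

theorem exists_pos_forall_mul_pos (hs : s.OrdConnected)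
    (hg : ∀ i < n, ∀ x ∈ s, HasDerivWithinAt (g i) (g (i + 1) x) s x)
    (hgn : ∀ x ∈ s, ∀ y ∈ s, 0 < g n x * g n y) (hα : α ∈ s) :
    ∃ η > 0, ∀ t ∈ s, |t - α| < η →
      (∀ i ≤ n, g i α ≠ 0 → 0 < g i α * g i t) ∧
      (α < t → ∀ i < n, g i α = 0 → 0 < g i t * g (i + 1) t) := by
  have hleft : ∀ᶠ t in 𝓝[s] α, ∀ i ∈ Iic n, g i α ≠ 0 → 0 < g i α * g i t :=
    (finite_Iic n).eventually_all.2 fun i hi => by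
      by_cases h0 : g i α = 0
      · exact .of_forall fun _ h => absurd h0 h
      · exact (eventually_mul_pos_of_ne_zero hg hgn hα hi h0).mono fun _ h _ => h
  have hright : ∀ᶠ t in 𝓝[>] α, ∀ i ∈ Iio n, g i α = 0 → t ∈ s → 0 < g i t * g (i + 1) t :=
    (finite_Iio n).eventually_all.2 fun i hi => by
      by_cases h0 : g i α = 0
      · exact (eventually_mul_deriv_pos_of_eq_zero hs hα (hg i hi) h0
          (eventually_nhdsGT_ne_zero hs hg hgn hα hi)).mono fun _ h _ => h
      · exact .of_forall fun _ h => absurd h h0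
  obtain ⟨η, hη, h⟩ := Metric.eventually_nhds_iff.1
    ((eventually_nhdsWithin_iff.1 hleft).and (eventually_nhdsWithin_iff.1 hright))
  refine ⟨η, hη, fun t ht htη => ⟨(h ?_).1 ht, fun hαt i hi h0 => (h ?_).2 hαt i hi h0 ht⟩⟩ <;>
    rwa [Real.dist_eq]

end DerivativeChain

theorem claim_one_general (f : ℝ → ℝ) (a b : ℝ) (n : ℕ)
    (hdiff : ∀ i < n, ∀ x ∈ Set.Icc a b,
      DifferentiableWithinAt ℝ (iteratedDerivWithin i f (Set.Icc a b)) (Set.Icc a b) x)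
    (hsign : (∀ x ∈ Set.Icc a b, 0 < iteratedDerivWithin n f (Set.Icc a b) x) ∨
             (∀ x ∈ Set.Icc a b, iteratedDerivWithin n f (Set.Icc a b) x < 0))
    (α : ℝ) (hα : α ∈ Set.Icc a b) (hfα : f α ≠ 0) :
    ∃ η > (0 : ℝ), ∀ u ∈ Set.Icc a b, ∀ v ∈ Set.Icc a b,
      α - η < u → u ≤ α → α ≤ v → v < α + η →
      (∀ x ∈ Set.Icc u v, f x ≠ 0) ∧
      vF n f (Set.Icc a b) v ≤ vF n f (Set.Icc a b) u := by
  set g : ℕ → ℝ → ℝ := fun i => iteratedDerivWithin i f (Icc a b)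
  have hg : ∀ i < n, ∀ x ∈ Icc a b, HasDerivWithinAt (g i) (g (i + 1) x) (Icc a b) x :=
    fun i hi x hx => by
      simpa [g, iteratedDerivWithin_succ] using (hdiff i hi x hx).hasDerivWithinAt
  have hgn : ∀ x ∈ Icc a b, ∀ y ∈ Icc a b, 0 < g n x * g n y := by
    rcases hsign with h | h
    · exact fun x hx y hy => mul_pos (h x hx) (h y hy)
    · exact fun x hx y hy => mul_pos_of_neg_of_neg (h x hx) (h y hy)
  obtain ⟨η, hη, hnear⟩ := exists_pos_forall_mul_pos ordConnected_Icc hg hgn hα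
  refine ⟨η, hη, fun u hu v hv hαu huα hαv hvα => ⟨fun x hx => ?_, ?_⟩⟩
  · have hx' := (hnear x ⟨hu.1.trans hx.1, hx.2.trans hv.2⟩
      (abs_lt.2 ⟨by linarith [hx.1], by linarith [hx.2]⟩)).1 0 n.zero_le (by simpa [g] using hfα)
    simpa [g] using right_ne_zero_of_mul hx'.ne'
  have hu' := hnear u hu (abs_lt.2 ⟨by linarith, by linarith⟩)
  have hv' := hnear v hv (abs_lt.2 ⟨by linarith, by linarith⟩)
  calc vF n f (Icc a b) v ≤ vF n f (Icc a b) α := by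
        rcases hαv.eq_or_lt with rfl | hlt
        · exact le_rfl
        · exact signChanges.ofFn_le_of_next_sign n (g · α) (g · v)
            (right_ne_zero_of_mul (hgn α hα α hα).ne') hv'.1 (hv'.2 hlt)
    _ ≤ vF n f (Icc a b) u := signChanges.le_of_forall₂ <| List.forall₂_iff_get.2
        ⟨by simp, fun i hi _ => by
          simp only [List.get_eq_getElem, List.getElem_ofFn]
          exact hu'.1 i (by simpa [Nat.lt_succ_iff] using hi)⟩

/-- Local behavior at a non-zero point (Claim 1): if `f` is `n` times differentiable on
`[a, b]` with `f⁽ⁿ⁾` never vanishing and of constant sign, and `α ∈ [a, b]` satisfies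
`f(α) ≠ 0`, then for all `u, v ∈ [a, b]` sufficiently close to `α` with `u ≤ α ≤ v`,
`f` has no zero in `[u, v]` and `v(f, u, n) ≥ v(f, v, n)`. -/
theorem claim_one (f : ℝ → ℝ) (a b : ℝ) (hab : a ≤ b) (n : ℕ)
    (hdiff : ∀ i < n, ∀ x ∈ Set.Icc a b,
      DifferentiableWithinAt ℝ (iteratedDerivWithin i f (Set.Icc a b)) (Set.Icc a b) x)
    (hne : ∀ x ∈ Set.Icc a b, iteratedDerivWithin n f (Set.Icc a b) x ≠ 0)
    (hsign : (∀ x ∈ Set.Icc a b, 0 < iteratedDerivWithin n f (Set.Icc a b) x) ∨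
             (∀ x ∈ Set.Icc a b, iteratedDerivWithin n f (Set.Icc a b) x < 0))
    (α : ℝ) (hα : α ∈ Set.Icc a b) (hfα : f α ≠ 0) :
    ∃ η > (0 : ℝ), ∀ u ∈ Set.Icc a b, ∀ v ∈ Set.Icc a b,
      α - η < u → u ≤ α → α ≤ v → v < α + η →
      (∀ x ∈ Set.Icc u v, f x ≠ 0) ∧
      vF n f (Set.Icc a b) v ≤ vF n f (Set.Icc a b) u :=
  claim_one_general f a b n hdiff hsign α hα hfα
end
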